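/- arXiv:1302.6683 — 3 statements merged into one kernel-verified Lean document; each statement's English description precedes it below -/
import Mathlib

section
/- The estimation set satisfies the recursion χ(w|[τ,t]) = ρ(w|[τ,t−1]) ∩ χ(w(t)) for τ < t, where χ(w(t)) = {ξ | ∃ ξ', (ξ, w(t), ξ') ∈ Δ} is the set of states admitting the symbol w(t). -/
def chi {X W : Type*} (Δ : Set (X × W × X)) (τ t : ℕ) (w : ℕ → W) : Set X :=
  {ξ | ∃ (w' : ℕ → W) (x : ℕ → X),
    (∀ s, (x s, w' s, x (s + 1)) ∈ Δ) ∧ x t = ξ ∧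
    ∀ l, τ ≤ l → l ≤ t → w' l = w l}

def rho {X W : Type*} (Δ : Set (X × W × X)) (τ t : ℕ) (w : ℕ → W) : Set X :=
  {ξ | ∃ (w' : ℕ → W) (x : ℕ → X),
    (∀ s, (x s, w' s, x (s + 1)) ∈ Δ) ∧ x (t + 1) = ξ ∧
    ∀ l, τ ≤ l → l ≤ t → w' l = w l}

/-- States admitting the symbol `ω`. -/
def chiSym {X W : Type*} (Δ : Set (X × W × X)) (ω : W) : Set X :=
  {ξ | ∃ ξ', (ξ, ω, ξ') ∈ Δ}

theorem chi_recursion {X W : Type*} (Δ : Set (X × W × X))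
    (hnb : ∀ ξ : X, ∃ (ω : W) (ξ' : X), (ξ, ω, ξ') ∈ Δ)
    (τ t : ℕ) (hτt : τ < t) (w : ℕ → W) :
    chi Δ τ t w = rho Δ τ (t - 1) w ∩ chiSym Δ (w t) := by
  have ht : t - 1 + 1 = t := by omega
  ext ξ
  constructor
  · rintro ⟨w', x, hΔ, hxt, hw⟩
    refine ⟨⟨w', x, hΔ, by rw [ht]; exact hxt, fun l hl1 hl2 => hw l hl1 (le_trans hl2 (Nat.sub_le t 1))⟩, ?_⟩
    refine ⟨x (t + 1), ?_⟩
    have := hΔ t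
    rwa [hw t (le_of_lt hτt) le_rfl, hxt] at this
  · rintro ⟨⟨w', x, hΔ, hxt, hw⟩, ξ', hξ'⟩
    rw [ht] at hxt
    -- choice function for non-blocking extension
    let f : X → W × X := fun ζ => ⟨(hnb ζ).choose, (hnb ζ).choose_spec.choose⟩
    have hf : ∀ ζ, (ζ, (f ζ).1, (f ζ).2) ∈ Δ := fun ζ => (hnb ζ).choose_spec.choose_spec
    -- future trajectory from ξ'
    let y : ℕ → X := fun n => Nat.rec ξ' (fun _ z => (f z).2) n
    have hy : ∀ n, y (n + 1) = (f (y n)).2 := fun n => rfl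
    let x'' : ℕ → X := fun s => if s ≤ t then x s else y (s - t - 1)
    let w'' : ℕ → W := fun s => if s < t then w' s else if s = t then w t else (f (y (s - t - 1))).1
    refine ⟨w'', x'', fun s => ?_, ?_, fun l hl1 hl2 => ?_⟩
    · rcases lt_trichotomy s t with h | h | h
      · have h1 : s ≤ t := le_of_lt h
        have h2 : s + 1 ≤ t := h
        simp only [x'', w'', if_pos h1, if_pos h, if_pos h2]
        exact hΔ s
      · subst h
        have h1 : ¬ s + 1 ≤ s := by omega
        have h2 : s + 1 - s - 1 = 0 := by omega
        simp only [x'', w'', if_pos le_rfl, if_neg (lt_irrefl s), if_pos rfl, if_neg h1, h2]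
        rw [hxt]
        exact hξ'
      · have h1 : ¬ s ≤ t := not_le.mpr h
        have h2 : ¬ s + 1 ≤ t := by omega
        have h3 : ¬ s < t := not_lt.mpr (le_of_lt h)
        have h4 : s ≠ t := ne_of_gt h
        have h5 : s + 1 - t - 1 = (s - t - 1) + 1 := by omega
        simp only [x'', w'', if_neg h1, if_neg h2, if_neg h3, if_neg h4, h5, hy]
        exact hf _
    · simp only [x'', if_pos le_rfl]
      exact hxt
    · rcases lt_or_eq_of_le hl2 with h | h
      · have : l ≤ t - 1 := by omega
        simp only [w'', if_pos h]
        exact hw l hl1 this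
      · subst h
        simp [w'']
end

section
/- For an I/S/ - machine with a singleton output map, the partitioning of the transition relation by input symbols, δ_j = {(ξ,(μ_j,ν),ξ')∈Δ}, satisfies chain property (i): each state ξ admits a unique external symbol in {μ_j}×Y, namely (μ_j, h(ξ,μ_j)). If, moreover, the transition map ξ ↦ f(ξ,μ_j) is absolutely injective, then δ_j is a non-deterministic chain over Ω_j = {μ_j}×Y. -/
theorem isMinus_chain {X U Y : Type*}
    (Δ : Set (X × (U × Y) × X))
    (f : X → U → Set X) (hf : ∀ ξ μ, (f ξ μ).Nonempty)
    (h : X → U → Y)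
    (hΔ : ∀ ξ μ ν ξ', (ξ, (μ, ν), ξ') ∈ Δ ↔ ξ' ∈ f ξ μ ∧ ν = h ξ μ)
    (μ : U)
    (δ : Set (X × (U × Y) × X))
    (hδ : δ = {tr ∈ Δ | tr.2.1.1 = μ}) :
    -- chain property (i): each state admits a unique external symbol in {μ}×Y
    (∀ ξ ξ' ξ'' (ω' ω'' : U × Y),
        (ξ, ω', ξ') ∈ δ → (ξ, ω'', ξ'') ∈ δ → ω' = ω'') ∧
    -- if ξ ↦ f(ξ,μ) is absolutely injective, then δ is a non-deterministic
    -- chain over Ω = {μ}×Y, i.e. (i) and (ii) hold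
    ((∀ ξ' ξ'' : X, (f ξ' μ ∩ f ξ'' μ).Nonempty → ξ' = ξ'') →
      ((∀ ξ ξ' ξ'' (ω' ω'' : U × Y),
          (ξ, ω', ξ') ∈ δ → (ξ, ω'', ξ'') ∈ δ → ω' = ω'') ∧
       (∀ ξ ξ' ξ'' (ω' ω'' : U × Y),
          (ξ', ω', ξ) ∈ δ → (ξ'', ω'', ξ) ∈ δ → ξ' = ξ''))) := by
  subst hδ
  have key : ∀ ξ ξ' (ω : U × Y),
      (ξ, ω, ξ') ∈ {tr ∈ Δ | tr.2.1.1 = μ} →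
      ω = (μ, h ξ μ) ∧ ξ' ∈ f ξ μ := by
    rintro ξ ξ' ⟨u, ν⟩ ⟨hmem, heq⟩
    simp only at heq
    subst heq
    rw [hΔ] at hmem
    exact ⟨by rw [hmem.2], hmem.1⟩
  have prop1 : ∀ ξ ξ' ξ'' (ω' ω'' : U × Y),
      (ξ, ω', ξ') ∈ {tr ∈ Δ | tr.2.1.1 = μ} →
      (ξ, ω'', ξ'') ∈ {tr ∈ Δ | tr.2.1.1 = μ} → ω' = ω'' := by
    intro ξ ξ' ξ'' ω' ω'' h1 h2
    rw [(key _ _ _ h1).1, (key _ _ _ h2).1]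
  refine ⟨prop1, fun hinj => ⟨prop1, ?_⟩⟩
  intro ξ ξ' ξ'' ω' ω'' h1 h2
  exact hinj _ _ ⟨ξ, (key _ _ _ h1).2, (key _ _ _ h2).2⟩
end

section
/- For a time-invariant behavior 𝓑, any ℓ-complete behavior 𝓑' with 𝓑'|[0,ℓ] ⊇ 𝓑|[0,ℓ] satisfies 𝓑' ⊇ 𝓑; in particular the behavior defined by 𝓑_ℓ = {w | ∀t, σᵗw|[0,ℓ] ∈ 𝓑|[0,ℓ]} contains 𝓑 and is ℓ-complete, and is the strongest ℓ-complete approximation of 𝓑. -/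
def shift {W : Type*} (w : ℕ → W) : ℕ → W := fun t => w (t + 1)

def IsLComplete {W : Type*} (ℓ : ℕ) (B' : Set (ℕ → W)) : Prop :=
  ∀ w : ℕ → W, w ∈ B' ↔ ∀ t, ∃ w' ∈ B', ∀ i ≤ ℓ, w (t + i) = w' i

lemma shift_iter {W : Type*} (w : ℕ → W) (t i : ℕ) :
    (shift^[t] w) i = w (t + i) := by
  induction t generalizing w with
  | zero => simp
  | succ n ih =>
    rw [Function.iterate_succ_apply, ih]
    simp [shift, Nat.add_assoc, Nat.add_comm 1 i, Nat.succ_add]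

lemma shift_iter_mem {W : Type*} {B : Set (ℕ → W)} (htime : shift '' B ⊆ B)
    {w : ℕ → W} (hw : w ∈ B) (t : ℕ) : shift^[t] w ∈ B := by
  induction t with
  | zero => exact hw
  | succ n ih => rw [Function.iterate_succ_apply']; exact htime ⟨_, ih, rfl⟩

theorem strongest_lcomplete_construction {W : Type*}
    (B : Set (ℕ → W)) (htime : shift '' B ⊆ B) (ℓ : ℕ)
    (Bℓ : Set (ℕ → W))
    (hBℓ : Bℓ = {w | ∀ t, ∃ w' ∈ B, ∀ i ≤ ℓ, w (t + i) = w' i}) :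
    -- any ℓ-complete behavior whose windows contain those of B contains B
    (∀ B' : Set (ℕ → W), IsLComplete ℓ B' →
      (∀ w ∈ B, ∃ w' ∈ B', ∀ i ≤ ℓ, w i = w' i) → B ⊆ B') ∧
    -- Bℓ contains B, is ℓ-complete, and is the strongest such approximation
    B ⊆ Bℓ ∧ IsLComplete ℓ Bℓ ∧
    (∀ B' : Set (ℕ → W), IsLComplete ℓ B' → B ⊆ B' → Bℓ ⊆ B') := by
  subst hBℓ
  refine ⟨?_, ?_, ?_, ?_⟩
  · intro B' hB' hwin w hw
    rw [hB' w]
    intro t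
    obtain ⟨w', hw', h⟩ := hwin _ (shift_iter_mem htime hw t)
    exact ⟨w', hw', fun i hi => by rw [← shift_iter w t i]; exact h i hi⟩
  · intro w hw t
    exact ⟨shift^[t] w, shift_iter_mem htime hw t,
      fun i _ => (shift_iter w t i).symm⟩
  · intro w
    constructor
    · intro hw t
      refine ⟨shift^[t] w, ?_, fun i _ => (shift_iter w t i).symm⟩
      intro s
      obtain ⟨w', hw', h⟩ := hw (t + s)
      exact ⟨w', hw', fun i hi => by rw [shift_iter, ← Nat.add_assoc]; exact h i hi⟩
    · intro h t
      obtain ⟨w', hw', hmatch⟩ := h t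
      obtain ⟨w'', hw'', h0⟩ := hw' 0
      exact ⟨w'', hw'', fun i hi => by rw [hmatch i hi]; simpa using h0 i hi⟩
  · intro B' hB' hBB' w hw
    rw [hB' w]
    intro t
    obtain ⟨w', hw', h⟩ := hw t
    exact ⟨w', hBB' hw', h⟩
end
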